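/- arXiv:2409.06973 — 5 statements merged into one kernel-verified Lean document; each statement's English description precedes it below -/
import Mathlib

section
/- The tree language L_{γγ} = {σ(γⁿ#, γⁿ#) | n ∈ ℕ} over Σ = {σ⁽²⁾, γ⁽¹⁾, #⁽⁰⁾} is not recognizable by any non-global Parikh tree automaton (of any dimension). -/
/-! ## Trees over ranked alphabets: a symbol `s` has `ar s` children -/

inductive GTree (S : Type) (ar : S → ℕ) : Type where
  | node (s : S) (c : Fin (ar s) → GTree S ar) : GTree S ar

namespace GTree
variable {S : Type} {ar : S → ℕ}

/-- The height of a tree (leaves have height 0). -/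
def height : GTree S ar → ℕ
  | node _ c => Finset.univ.sup fun i => height (c i) + 1

/-- The size (number of positions) of a tree. -/
def size : GTree S ar → ℕ
  | node _ c => 1 + ∑ i, size (c i)

/-- The subtree at a position (a list of child indices), if the position exists. -/
def subAt : GTree S ar → List ℕ → Option (GTree S ar)
  | t, [] => some t
  | node s c, i :: ρ => if h : i < ar s then subAt (c ⟨i, h⟩) ρ else none

/-- The list of path words of all complete (root-to-leaf) paths. -/
def pathWords : GTree S ar → List (List S)
  | node s c =>
    if _ : ar s = 0 then [[s]]
    else ((List.finRange (ar s)).map fun i => (pathWords (c i)).map (s :: ·)).flatten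

end GTree

/-! ## Semilinear sets -/

def IsLinearSetFin {m : ℕ} (C : Set (Fin m → ℕ)) : Prop :=
  ∃ (l : ℕ) (d0 : Fin m → ℕ) (d : Fin l → Fin m → ℕ),
    C = {v | ∃ c : Fin l → ℕ, v = d0 + ∑ i, c i • d i}

def IsSemilinear {m : ℕ} (C : Set (Fin m → ℕ)) : Prop :=
  ∃ (k : ℕ) (L : Fin k → Set (Fin m → ℕ)), (∀ i, IsLinearSetFin (L i)) ∧ C = ⋃ i, L i

/-! ## Non-global Parikh tree automata (PTA) -/

structure PTA (S : Type) (ar : S → ℕ) (m : ℕ) where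
  Q : Type
  finQ : Fintype Q
  init : Q
  D : Finset (Fin m → ℕ)
  trans : Q → (s : S) → (Fin (ar s) → Q × (Fin m → ℕ)) → Prop
  transD : ∀ q s f, trans q s f → ∀ i, (f i).2 ∈ D
  C : Set (Fin m → ℕ)
  semiC : IsSemilinear C

/-- `A.Acc q w ξ` : starting in configuration `(q, w)`, the automaton `A` can compute
the tree `ξ`, adding counter vectors pathwise; a nullary transition additionally
requires the current counter vector to lie in `A.C`. -/
inductive PTA.Acc {S : Type} {ar : S → ℕ} {m : ℕ} (A : PTA S ar m) :
    A.Q → (Fin m → ℕ) → GTree S ar → Prop where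
  | node {q : A.Q} {w : Fin m → ℕ} {s : S} {f : Fin (ar s) → A.Q × (Fin m → ℕ)}
      {c : Fin (ar s) → GTree S ar}
      (ht : A.trans q s f) (hC : ar s = 0 → w ∈ A.C)
      (hc : ∀ i, PTA.Acc A (f i).1 (w + (f i).2) (c i)) :
      PTA.Acc A q w (.node s c)

def PTA.Lang {S : Type} {ar : S → ℕ} {m : ℕ} (A : PTA S ar m) : Set (GTree S ar) :=
  {ξ | A.Acc A.init 0 ξ}

/-! ## The ranked alphabet {σ⁽²⁾, γ⁽¹⁾, #⁽⁰⁾} -/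

inductive Sg : Type where | sig | gam | hash
  deriving DecidableEq

def arG : Sg → ℕ
  | .sig => 2
  | .gam => 1
  | .hash => 0

instance : Fintype Sg :=
  ⟨⟨{Sg.sig, Sg.gam, Sg.hash}, by decide⟩, fun x => by cases x <;> decide⟩

def hashT : GTree Sg arG := .node .hash ![]
def gamT (t : GTree Sg arG) : GTree Sg arG := .node .gam ![t]
def sigT (l r : GTree Sg arG) : GTree Sg arG := .node .sig ![l, r]

/-- γⁿ(t) -/
def gpow : ℕ → GTree Sg arG → GTree Sg arG
  | 0, t => t
  | n + 1, t => gamT (gpow n t)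

/-- L_γγ = {σ(γⁿ#, γⁿ#) | n ∈ ℕ} -/
def Lgg : Set (GTree Sg arG) := {ξ | ∃ n, ξ = sigT (gpow n hashT) (gpow n hashT)}

/-- L₃ = {γⁿ(σ(γⁿ#, γⁿ#)) | n ∈ ℕ} -/
def L3 : Set (GTree Sg arG) := {ξ | ∃ n, ξ = gpow n (sigT (gpow n hashT) (gpow n hashT))}

/-!
An accepting run on `σ(γⁿ#, γⁿ#)` starts with one of finitely many root steps (a target state
and a counter increment from the finite set `D` for each child), so two distinct `n ≠ k` share
one. The runs below the root are independent of each other, so the runs on `γⁿ#` and `γᵏ#` can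
be recombined under that common root step into an accepting run on `σ(γⁿ#, γᵏ#) ∉ L_γγ`.
-/

namespace PTA

variable {S : Type} {ar : S → ℕ} {m : ℕ} (A : PTA S ar m)

theorem acc_node_iff {q : A.Q} {w : Fin m → ℕ} {s : S} {c : Fin (ar s) → GTree S ar} :
    A.Acc q w (.node s c) ↔ ∃ f : Fin (ar s) → A.Q × (Fin m → ℕ),
      A.trans q s f ∧ (ar s = 0 → w ∈ A.C) ∧ ∀ i, A.Acc (f i).1 (w + (f i).2) (c i) :=
  ⟨fun ⟨ht, hC, hc⟩ => ⟨_, ht, hC, hc⟩, fun ⟨_, ht, hC, hc⟩ => .node ht hC hc⟩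

theorem exists_ne_acc_node_mix {ι : Type*} [Infinite ι] {q : A.Q} {w : Fin m → ℕ} {s : S}
    (c : ι → Fin (ar s) → GTree S ar) (hc : ∀ n, A.Acc q w (.node s (c n))) :
    ∃ n k, n ≠ k ∧ ∀ c' : Fin (ar s) → GTree S ar, (∀ i, c' i = c n i ∨ c' i = c k i) →
      A.Acc q w (.node s c') := by
  have := A.finQ
  choose f hf hC hsub using fun n => A.acc_node_iff.mp (hc n)
  let rootStep : ι → Fin (ar s) → A.Q × A.D :=
    fun n i => ((f n i).1, ⟨(f n i).2, A.transD _ _ _ (hf n) i⟩)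
  obtain ⟨n, k, hne, hstep⟩ := Finite.exists_ne_map_eq_of_infinite rootStep
  have hfk : f k = f n := by
    funext i
    have h := congrFun hstep i
    simp only [rootStep, Prod.mk.injEq, Subtype.mk.injEq] at h
    exact Prod.ext h.1.symm h.2.symm
  refine ⟨n, k, hne, fun c' hc' => .node (hf n) (hC n) fun i => ?_⟩
  rcases hc' i with h | h
  · exact h ▸ hsub n i
  · exact h ▸ hfk ▸ hsub k i

end PTA

theorem height_gamT (t : GTree Sg arG) : (gamT t).height = t.height + 1 := by
  show Finset.univ.sup (fun i : Fin 1 => (![t] i).height + 1) = _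
  simp

theorem height_gpow_hashT (n : ℕ) : (gpow n hashT).height = n := by
  induction n with
  | zero => rfl
  | succ n ih => rw [gpow, height_gamT, ih]

theorem gpow_hashT_injective : Function.Injective (gpow · hashT) := fun n k h => by
  simpa only [height_gpow_hashT] using congrArg GTree.height h

theorem sigT_inj {l r l' r' : GTree Sg arG} : sigT l r = sigT l' r' ↔ l = l' ∧ r = r' := by
  refine ⟨fun h => ?_, fun ⟨hl, hr⟩ => hl ▸ hr ▸ rfl⟩
  have hc := eq_of_heq (GTree.node.inj h).2
  exact ⟨congrFun hc 0, congrFun hc 1⟩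

theorem sigT_gpow_mem_Lgg_iff {n k : ℕ} :
    sigT (gpow n hashT) (gpow k hashT) ∈ Lgg ↔ n = k := by
  refine ⟨fun ⟨j, hj⟩ => ?_, fun h => ⟨n, h ▸ rfl⟩⟩
  obtain ⟨hn, hk⟩ := sigT_inj.mp hj
  exact (gpow_hashT_injective hn).trans (gpow_hashT_injective hk).symm

theorem Lgg_not_PTA_recognizable :
    ¬ ∃ (m : ℕ) (A : PTA Sg arG m), A.Lang = Lgg := by
  rintro ⟨m, A, hL⟩
  have hacc (n : ℕ) : A.Acc A.init 0 (.node .sig ![gpow n hashT, gpow n hashT]) := by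
    change sigT _ _ ∈ A.Lang
    exact hL ▸ sigT_gpow_mem_Lgg_iff.mpr rfl
  obtain ⟨n, k, hne, hmix⟩ := A.exists_ne_acc_node_mix _ hacc
  have hnk : sigT (gpow n hashT) (gpow k hashT) ∈ A.Lang :=
    hmix _ fun i => by fin_cases i; exacts [.inl rfl, .inr rfl]
  rw [hL, sigT_gpow_mem_Lgg_iff] at hnk
  exact hne hnk
end

section
/- Let L be a tree language recognized by a GPTA. Then there exist constants l, p > 0 such that for every tree ξ ∈ L containing at least l pairwise independent subtrees of height at least p, there exist k ≥ 0, contexts ζ₁ ∈ C_Σ(X₂), ζ₂ ∈ C_Σ(X_{k+1}) with 0 < height(ζ₂) < p, trees s₁,…,s_k, t₁,…,t_k, u₁, u₂ ∈ T_Σ, and j ∈ [k+1], such that (1) ξ = ζ₁[ζ₂[s₁,…,s_{j-1},x₁,s_j,…,s_k]·u₁, ζ₂[t₁,…,t_{j-1},x₁,t_j,…,t_k]·u₂], (2) ζ₁[u₁, ζ₂[s…]·ζ₂[t…]·u₂] ∈ L, and (3) ζ₁[ζ₂[s…]·ζ₂[t…]·u₁, u₂] ∈ L (where ζ₂[s…]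 abbreviates ζ₂[s₁,…,s_{j-1},x₁,s_j,…,s_k] and similarly for t). -/
/-! ## Contexts -/

abbrev arCtx {S : Type} (ar : S → ℕ) : S ⊕ ℕ → ℕ := Sum.elim ar fun _ => 0

/-- Trees over `Σ` and (nullary) variables `x_1, x_2, …` (variable `x_{j+1}` is
represented by the label `Sum.inr j`). -/
abbrev Ctx (S : Type) (ar : S → ℕ) := GTree (S ⊕ ℕ) (arCtx ar)

/-- The occurrences of variables, as (position, variable index) pairs, in DFS
(= lexicographic) order. -/
def varOccs {S : Type} {ar : S → ℕ} : Ctx S ar → List (List ℕ × ℕ)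
  | .node (.inl s) c =>
      ((List.finRange (ar s)).map fun i =>
        (varOccs (c i)).map fun p => (i.1 :: p.1, p.2)).flatten
  | .node (.inr j) _ => [([], j)]

/-- A member of `C_Σ(X_k)`: exactly the variables `x_1, …, x_k` occur, each exactly
once, and in lexicographic left-to-right order. -/
def IsContext {S : Type} {ar : S → ℕ} (k : ℕ) (t : Ctx S ar) : Prop :=
  (varOccs t).map Prod.snd = List.range k

/-- Substitution of trees for the variables of a context (`f j` replaces `x_{j+1}`). -/
def substC {S : Type} {ar : S → ℕ} (f : ℕ → GTree S ar) : Ctx S ar → GTree S ar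
  | .node (.inl s) c => .node s fun i => substC f (c i)
  | .node (.inr j) _ => f j

/-- The assignment `[s 0, …, s (j-1), hole, s j, s (j+1), …]`, i.e. variable `j` is
sent to `hole` and the remaining variables to `s 0, s 1, …` in order. -/
def slot {S : Type} {ar : S → ℕ} (sv : ℕ → GTree S ar) (j : ℕ) (hole : GTree S ar) :
    ℕ → GTree S ar :=
  fun i => if i = j then hole else if i < j then sv i else sv (i - 1)

/-- The assignment `[t1, t2]` for a context with two variables. -/
def pick2 {S : Type} {ar : S → ℕ} (t1 t2 : GTree S ar) : ℕ → GTree S ar :=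
  fun i => if i = 0 then t1 else t2

/-! ## Global Parikh tree automata (GPTA) -/

structure GPTA (S : Type) (ar : S → ℕ) (m : ℕ) where
  Q : Type
  finQ : Fintype Q
  init : Q
  D : Finset (Fin m → ℕ)
  trans : Q → (s : S) → (Fin m → ℕ) → (Fin (ar s) → Q) → Prop
  transD : ∀ q s d f, trans q s d f → d ∈ D
  C : Set (Fin m → ℕ)
  semiC : IsSemilinear C

/-- `A.Run q ξ v` : there is a run of `A` from state `q` on a `D`-decoration of `ξ`
whose extended Parikh image (the sum of all vectors over all positions) is `v`. -/
inductive GPTA.Run {S : Type} {ar : S → ℕ} {m : ℕ} (A : GPTA S ar m) :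
    A.Q → GTree S ar → (Fin m → ℕ) → Prop where
  | node {q : A.Q} {s : S} {d : Fin m → ℕ} {f : Fin (ar s) → A.Q}
      {c : Fin (ar s) → GTree S ar} {v : Fin (ar s) → Fin m → ℕ}
      (ht : A.trans q s d f) (hc : ∀ i, GPTA.Run A (f i) (c i) (v i)) :
      GPTA.Run A q (.node s c) (d + ∑ i, v i)

def GPTA.Lang {S : Type} {ar : S → ℕ} {m : ℕ} (A : GPTA S ar m) : Set (GTree S ar) :=
  {ξ | ∃ v, A.Run A.init ξ v ∧ v ∈ A.C}

/-!
Fix an accepting run of `A` on `ξ`. Below each of the `l` independent tall subtrees, a path of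
length `|Q|` meets two positions in the same state `q`; the part of the subtree between them is a
spine: a context `ζ₂` of height in `(0, |Q|]` whose hole continues the path and whose other
variables stand for side subtrees. Plugging a tree accepted from `q` into such a spine gives a tree
accepted from `q`, and adds a fixed vector to the Parikh image. Contexts of bounded height have
boundedly many variables, so only finitely many triples (state, `ζ₂`, hole index) occur; once `l`
exceeds their number, two independent subtrees carry spines with the same triple. Moving either
spine on top of the other keeps the run valid and, since addition is commutative, keeps its
Parikh image, so the two new trees stay in `L`.
-/

lemma List.flatten_map_range_eq_single {β : Type*} {n i : ℕ} (h : ℕ → List β) (hi : i < n)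
    (h0 : ∀ t < n, t ≠ i → h t = []) : ((List.range n).map h).flatten = h i := by
  induction n with
  | zero => omega
  | succ n ih =>
    rw [List.range_succ, List.map_append, List.flatten_append]
    rcases Nat.lt_succ_iff_lt_or_eq.1 hi with hin | rfl
    · rw [ih hin fun t ht => h0 t (by omega), List.map_singleton, List.flatten_singleton,
        h0 n (by omega) (by omega), List.append_nil]
    · rw [List.flatten_eq_nil_iff.2 (by simpa using fun t ht => h0 t (by omega) (by omega))]
      simp

lemma List.flatten_map_range_eq_pair {β : Type*} {n i j : ℕ} (h : ℕ → List β) (hij : i < j)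
    (hj : j < n) (h0 : ∀ t < n, t ≠ i → t ≠ j → h t = []) :
    ((List.range n).map h).flatten = h i ++ h j := by
  induction n with
  | zero => omega
  | succ n ih =>
    rw [List.range_succ, List.map_append, List.flatten_append]
    rcases Nat.lt_succ_iff_lt_or_eq.1 hj with hjn | rfl
    · rw [ih hjn fun t ht => h0 t (by omega), List.map_singleton, List.flatten_singleton,
        h0 n (by omega) (by omega) (by omega), List.append_nil]
    · rw [List.flatten_map_range_eq_single h hij fun t ht hti => h0 t (by omega) hti (by omega)]
      simp

lemma List.flatten_map_range_eq_range_add {n i : ℕ} (k : ℕ) (hi : i < n) :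
    ((List.range n).map fun t =>
      if t < i then [t] else if t = i then (List.range (k + 1)).map (· + i) else [t + k]).flatten =
      List.range (n + k) := by
  induction n with
  | zero => omega
  | succ n ih =>
    rw [List.range_succ (n := n), List.map_append, List.flatten_append]
    rcases Nat.lt_succ_iff_lt_or_eq.1 hi with hin | rfl
    · rw [ih hin, Nat.add_right_comm, List.range_succ (n := n + k), List.map_singleton,
        List.flatten_singleton, if_neg (by omega), if_neg (by omega)]
    · rw [List.map_congr_left fun t ht => if_pos (List.mem_range.1 ht), ← List.flatMap_def,
        List.flatMap_singleton', Nat.add_right_comm, Nat.add_assoc,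
        List.range_add (n := i) (m := k + 1), List.map_singleton, List.flatten_singleton,
        if_neg (lt_irrefl i), if_pos rfl]
      exact congrArg _ (List.map_congr_left fun _ _ => Nat.add_comm _ _)

def BranchesLeft (a b : List ℕ) : Prop :=
  ∃ (π : List ℕ) (x y : ℕ) (σ τ : List ℕ), x < y ∧ a = π ++ x :: σ ∧ b = π ++ y :: τ

lemma branchesLeft_or_branchesLeft {a b : List ℕ} (hab : ¬a <+: b) (hba : ¬b <+: a) :
    BranchesLeft a b ∨ BranchesLeft b a := by
  induction a generalizing b with
  | nil => exact absurd List.nil_prefix hab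
  | cons x a ih =>
    obtain _ | ⟨y, b⟩ := b
    · exact absurd List.nil_prefix hba
    rcases lt_trichotomy x y with hxy | rfl | hxy
    · exact Or.inl ⟨[], x, y, a, b, hxy, rfl, rfl⟩
    · rw [List.cons_prefix_cons, not_and] at hab hba
      refine (ih (hab rfl) (hba rfl)).imp ?_ ?_ <;>
        exact fun ⟨π, u, w, σ, τ, h, ha, hb⟩ => ⟨x :: π, u, w, σ, τ, h, by simp [ha], by simp [hb]⟩
    · exact Or.inr ⟨[], y, x, b, a, hxy, rfl, rfl⟩

lemma List.not_prefix_append_of_not_prefix {α : Type*} {a b σ τ : List α} (hab : ¬a <+: b)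
    (hba : ¬b <+: a) : ¬a ++ σ <+: b ++ τ := fun h =>
  (List.prefix_or_prefix_of_prefix ((List.prefix_append a σ).trans h)
    (List.prefix_append b τ)).elim hab hba

namespace GTree

variable {S : Type} {ar : S → ℕ}

def replaceAt : GTree S ar → List ℕ → GTree S ar → GTree S ar
  | _, [], w => w
  | node s c, i :: ρ, w =>
      if h : i < ar s then node s (Function.update c ⟨i, h⟩ (replaceAt (c ⟨i, h⟩) ρ w))
      else node s c

@[simp] lemma subAt_nil (t : GTree S ar) : t.subAt [] = some t := by
  cases t; rfl

lemma subAt_cons (s : S) (c : Fin (ar s) → GTree S ar) (i : ℕ) (ρ : List ℕ) :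
    (node s c).subAt (i :: ρ) = if h : i < ar s then (c ⟨i, h⟩).subAt ρ else none := rfl

@[simp] lemma replaceAt_nil (t w : GTree S ar) : t.replaceAt [] w = w := by
  cases t; rfl

lemma replaceAt_cons (s : S) (c : Fin (ar s) → GTree S ar) (i : ℕ) (ρ : List ℕ)
    (w : GTree S ar) :
    (node s c).replaceAt (i :: ρ) w =
      if h : i < ar s then node s (Function.update c ⟨i, h⟩ ((c ⟨i, h⟩).replaceAt ρ w))
      else node s c := rfl

lemma height_node (s : S) (c : Fin (ar s) → GTree S ar) :
    (node s c).height = Finset.univ.sup fun i => (c i).height + 1 := rfl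

lemma lt_ar_of_subAt_cons_eq_some {s : S} {c : Fin (ar s) → GTree S ar} {i : ℕ} {ρ : List ℕ}
    {u : GTree S ar} (h : (node s c).subAt (i :: ρ) = some u) : i < ar s := by
  by_contra hi
  rw [subAt_cons, dif_neg hi] at h
  exact absurd h (by simp)

lemma replaceAt_eq_self {ρ : List ℕ} {t u : GTree S ar} (h : t.subAt ρ = some u) :
    t.replaceAt ρ u = t := by
  induction ρ generalizing t with
  | nil => simpa [eq_comm] using h
  | cons i ρ ih =>
    obtain ⟨s, c⟩ := t
    have hi := lt_ar_of_subAt_cons_eq_some h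
    rw [subAt_cons, dif_pos hi] at h
    rw [replaceAt_cons, dif_pos hi, ih h, Function.update_eq_self]

def vars (ζ : Ctx S ar) : List ℕ := (varOccs ζ).map Prod.snd

lemma isContext_iff {k : ℕ} {ζ : Ctx S ar} : IsContext k ζ ↔ ζ.vars = List.range k := Iff.rfl

lemma vars_node_inl (s : S) (c : Fin (arCtx ar (Sum.inl s)) → Ctx S ar) :
    vars (node (Sum.inl s) c) =
      ((List.finRange (arCtx ar (Sum.inl s))).map fun i => (c i).vars).flatten := by
  simp [vars, varOccs, List.map_flatten, Function.comp_def]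

lemma vars_node_inl_eq_flatten_range (s : S) (c : Fin (arCtx ar (Sum.inl s)) → Ctx S ar)
    (l : ℕ → List ℕ) (hl : ∀ i, (c i).vars = l i) :
    vars (node (Sum.inl s) c) = ((List.range (ar s)).map l).flatten := by
  rw [vars_node_inl, ← List.map_coe_finRange_eq_range, List.map_map]
  exact congrArg _ (List.map_congr_left fun i _ => hl i)

@[simp] lemma vars_node_inr (j : ℕ) (c : Fin (arCtx ar (Sum.inr j)) → Ctx S ar) :
    vars (node (Sum.inr j) c) = [j] := rfl

lemma mem_vars_node_inl {s : S} {c : Fin (arCtx ar (Sum.inl s)) → Ctx S ar} (i : Fin (ar s)) {t : ℕ}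
    (ht : t ∈ (c i).vars) : t ∈ vars (node (Sum.inl s) c) := by
  rw [vars_node_inl, List.mem_flatten]
  exact ⟨_, List.mem_map_of_mem (List.mem_finRange i), ht⟩

@[simp] lemma substC_node_inl (f : ℕ → GTree S ar) (s : S)
    (c : Fin (arCtx ar (Sum.inl s)) → Ctx S ar) :
    substC f (node (Sum.inl s) c) = node s fun i => substC f (c i) := rfl

lemma substC_congr {f g : ℕ → GTree S ar} (ζ : Ctx S ar) (h : ∀ t ∈ ζ.vars, f t = g t) :
    substC f ζ = substC g ζ := by
  induction ζ with
  | node a c ih =>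
    cases a with
    | inl s => exact congrArg (node s) (funext fun i => ih i fun t ht =>
        h t (mem_vars_node_inl i ht))
    | inr j => exact h j (by simp)

def toCtx : GTree S ar → Ctx S ar
  | node s c => node (Sum.inl s) fun i => toCtx (c i)

@[simp] lemma substC_toCtx (f : ℕ → GTree S ar) (t : GTree S ar) : substC f t.toCtx = t := by
  induction t with
  | node s c ih => exact congrArg (node s) (funext ih)

@[simp] lemma vars_toCtx (t : GTree S ar) : t.toCtx.vars = [] := by
  induction t with
  | node s c ih =>
    rw [toCtx, vars_node_inl, List.flatten_eq_nil_iff]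
    simpa using ih

def var (n : ℕ) : Ctx S ar := node (Sum.inr n) Fin.elim0

@[simp] lemma substC_var (f : ℕ → GTree S ar) (n : ℕ) : substC f (var n) = f n := rfl

@[simp] lemma vars_var (n : ℕ) : (var n : Ctx S ar).vars = [n] := rfl

@[simp] lemma height_var (n : ℕ) : (var n : Ctx S ar).height = 0 := by
  simp [var, height]

def shiftVars (n : ℕ) : Ctx S ar → Ctx S ar
  | node (Sum.inl s) c => node (Sum.inl s) fun i => shiftVars n (c i)
  | node (Sum.inr j) _ => var (j + n)

lemma vars_shiftVars (n : ℕ) (ζ : Ctx S ar) : (ζ.shiftVars n).vars = ζ.vars.map (· + n) := by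
  induction ζ with
  | node a c ih =>
    cases a with
    | inl s =>
      rw [shiftVars, vars_node_inl, vars_node_inl, List.map_flatten, List.map_map]
      exact congrArg _ (List.map_congr_left fun i _ => ih i)
    | inr j => simp [shiftVars]

lemma substC_shiftVars (n : ℕ) (f : ℕ → GTree S ar) (ζ : Ctx S ar) :
    substC f (ζ.shiftVars n) = substC (fun t => f (t + n)) ζ := by
  induction ζ with
  | node a c ih =>
    cases a with
    | inl s => exact congrArg (node s) (funext ih)
    | inr j => rfl

lemma height_shiftVars (n : ℕ) (ζ : Ctx S ar) : (ζ.shiftVars n).height = ζ.height := by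
  induction ζ with
  | node a c ih =>
    cases a with
    | inl s =>
      simp only [shiftVars, height_node, ih]
    | inr j =>
      simp only [shiftVars, height_var, height_node]
      exact ((Finset.sup_eq_bot_iff _ _).2 fun i => Fin.elim0 i).symm

def holeAt : GTree S ar → List ℕ → ℕ → Ctx S ar
  | _, [], n => var n
  | node s c, i :: ρ, n =>
      node (Sum.inl s) fun i' => if i'.1 = i then holeAt (c i') ρ n else (c i').toCtx

lemma vars_holeAt {ρ : List ℕ} {t u : GTree S ar} (n : ℕ) (h : t.subAt ρ = some u) :
    (t.holeAt ρ n).vars = [n] := by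
  induction ρ generalizing t with
  | nil => cases t; rfl
  | cons i ρ ih =>
    obtain ⟨s, c⟩ := t
    have hi := lt_ar_of_subAt_cons_eq_some h
    rw [subAt_cons, dif_pos hi] at h
    rw [holeAt, vars_node_inl_eq_flatten_range _ _ fun t => if t = i then [n] else [],
      List.flatten_map_range_eq_single _ hi fun t _ ht => if_neg ht, if_pos rfl]
    intro i'
    split_ifs with h'
    · obtain rfl : i' = ⟨i, hi⟩ := Fin.ext h'
      exact ih h
    · exact vars_toCtx _

lemma substC_holeAt {ρ : List ℕ} {t u : GTree S ar} (n : ℕ) (f : ℕ → GTree S ar)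
    (h : t.subAt ρ = some u) : substC f (t.holeAt ρ n) = t.replaceAt ρ (f n) := by
  induction ρ generalizing t with
  | nil => cases t; rfl
  | cons i ρ ih =>
    obtain ⟨s, c⟩ := t
    have hi := lt_ar_of_subAt_cons_eq_some h
    rw [subAt_cons, dif_pos hi] at h
    rw [holeAt, substC_node_inl, replaceAt_cons, dif_pos hi]
    refine congrArg (node s) (funext fun i' => ?_)
    by_cases h' : i'.1 = i
    · obtain rfl : i' = ⟨i, hi⟩ := Fin.ext h'
      rw [if_pos rfl, Function.update_self]
      exact ih h
    · rw [if_neg h', substC_toCtx, Function.update_of_ne fun e => h' (by rw [e])]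

def holesAt : GTree S ar → List ℕ → List ℕ → Ctx S ar
  | node s c, i :: ρ, j :: σ =>
      if i = j then
        node (Sum.inl s) fun i' => if i'.1 = i then holesAt (c i') ρ σ else (c i').toCtx
      else
        node (Sum.inl s) fun i' =>
          if i'.1 = i then (c i').holeAt ρ 0
          else if i'.1 = j then (c i').holeAt σ 1 else (c i').toCtx
  | t, _, _ => t.toCtx

section holesAt

variable {π σ τ : List ℕ} {x y : ℕ} {t ua ub : GTree S ar}

lemma vars_holesAt (hxy : x < y) (ha : t.subAt (π ++ x :: σ) = some ua)
    (hb : t.subAt (π ++ y :: τ) = some ub) :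
    (t.holesAt (π ++ x :: σ) (π ++ y :: τ)).vars = [0, 1] := by
  induction π generalizing t with
  | nil =>
    obtain ⟨s, c⟩ := t
    have hx := lt_ar_of_subAt_cons_eq_some ha
    have hy := lt_ar_of_subAt_cons_eq_some hb
    rw [List.nil_append, subAt_cons, dif_pos hx] at ha
    rw [List.nil_append, subAt_cons, dif_pos hy] at hb
    rw [List.nil_append, List.nil_append, holesAt, if_neg hxy.ne,
      vars_node_inl_eq_flatten_range _ _ fun t => if t = x then [0] else if t = y then [1] else [],
      List.flatten_map_range_eq_pair _ hxy hy fun t _ htx hty => by simp [htx, hty],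
      if_pos rfl, if_neg hxy.ne', if_pos rfl, List.singleton_append]
    intro i
    split_ifs with h₁ h₂
    · obtain rfl : i = ⟨x, hx⟩ := Fin.ext h₁
      exact vars_holeAt 0 ha
    · obtain rfl : i = ⟨y, hy⟩ := Fin.ext h₂
      exact vars_holeAt 1 hb
    · exact vars_toCtx _
  | cons z π ih =>
    obtain ⟨s, c⟩ := t
    have hz := lt_ar_of_subAt_cons_eq_some ha
    rw [List.cons_append, subAt_cons, dif_pos hz] at ha hb
    rw [List.cons_append, List.cons_append, holesAt, if_pos rfl,
      vars_node_inl_eq_flatten_range _ _ fun t => if t = z then [0, 1] else [],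
      List.flatten_map_range_eq_single _ hz fun t _ ht => if_neg ht, if_pos rfl]
    intro i
    split_ifs with h
    · obtain rfl : i = ⟨z, hz⟩ := Fin.ext h
      exact ih ha hb
    · exact vars_toCtx _

lemma substC_holesAt (f : ℕ → GTree S ar) (hxy : x < y)
    (ha : t.subAt (π ++ x :: σ) = some ua) (hb : t.subAt (π ++ y :: τ) = some ub) :
    substC f (t.holesAt (π ++ x :: σ) (π ++ y :: τ)) =
      (t.replaceAt (π ++ x :: σ) (f 0)).replaceAt (π ++ y :: τ) (f 1) := by
  induction π generalizing t with
  | nil =>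
    obtain ⟨s, c⟩ := t
    have hx := lt_ar_of_subAt_cons_eq_some ha
    have hy := lt_ar_of_subAt_cons_eq_some hb
    have hxy' : (⟨x, hx⟩ : Fin (ar s)) ≠ ⟨y, hy⟩ := fun e => hxy.ne (congrArg Fin.val e)
    rw [List.nil_append, subAt_cons, dif_pos hx] at ha
    rw [List.nil_append, subAt_cons, dif_pos hy] at hb
    rw [List.nil_append, List.nil_append, holesAt, if_neg hxy.ne, substC_node_inl,
      replaceAt_cons, dif_pos hx, replaceAt_cons, dif_pos hy,
      Function.update_of_ne hxy'.symm]
    refine congrArg (node s) (funext fun i => ?_)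
    split_ifs with h₁ h₂
    · obtain rfl : i = ⟨x, hx⟩ := Fin.ext h₁
      rw [Function.update_of_ne hxy', Function.update_self]
      exact substC_holeAt 0 f ha
    · obtain rfl : i = ⟨y, hy⟩ := Fin.ext h₂
      rw [Function.update_self]
      exact substC_holeAt 1 f hb
    · rw [substC_toCtx, Function.update_of_ne fun e => h₂ (by rw [e]),
        Function.update_of_ne fun e => h₁ (by rw [e])]
  | cons z π ih =>
    obtain ⟨s, c⟩ := t
    have hz := lt_ar_of_subAt_cons_eq_some ha
    rw [List.cons_append, subAt_cons, dif_pos hz] at ha hb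
    rw [List.cons_append, List.cons_append, holesAt, if_pos rfl, substC_node_inl,
      replaceAt_cons, dif_pos hz, replaceAt_cons, dif_pos hz, Function.update_self,
      Function.update_idem]
    refine congrArg (node s) (funext fun i => ?_)
    split_ifs with h
    · obtain rfl : i = ⟨z, hz⟩ := Fin.ext h
      rw [Function.update_self]
      exact ih ha hb
    · rw [substC_toCtx, Function.update_of_ne fun e => h (by rw [e])]

end holesAt

/-- The context `s(x₁, …, x_i, ζ', x_{i+k+2}, …)`, where `ζ'` is `ζ` with its variables
renamed `x_{i+1}, …, x_{i+k+1}`. -/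
def nodeCtx (s : S) (i k : ℕ) (ζ : Ctx S ar) : Ctx S ar :=
  node (Sum.inl s) fun i' =>
    if i'.1 < i then var i'.1 else if i'.1 = i then ζ.shiftVars i else var (i'.1 + k)

lemma isContext_nodeCtx {s : S} {i k : ℕ} {ζ : Ctx S ar} (hi : i < ar s)
    (hζ : IsContext (k + 1) ζ) : IsContext (k + ar s) (nodeCtx s i k ζ) := by
  rw [isContext_iff] at hζ ⊢
  rw [nodeCtx, vars_node_inl_eq_flatten_range _ _ _ fun i' => ?_,
    List.flatten_map_range_eq_range_add k hi, add_comm]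
  split_ifs <;> simp [vars_shiftVars, hζ]

lemma height_nodeCtx {s : S} {i k : ℕ} (ζ : Ctx S ar) (hi : i < ar s) :
    (nodeCtx s i k ζ).height = ζ.height + 1 := by
  rw [nodeCtx, height_node]
  refine le_antisymm (Finset.sup_le fun i' _ => ?_) ?_
  · split_ifs <;> simp [height_shiftVars]
  · refine le_trans ?_ (Finset.le_sup (Finset.mem_univ ⟨i, hi⟩))
    simp [height_shiftVars]

/-- The assignment of the side trees of `nodeCtx`: the siblings `ch` and the side trees `g`
of the inner context. -/
def nodeSides {s : S} (ch : Fin (ar s) → GTree S ar) (i : Fin (ar s)) (k : ℕ)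
    (g : ℕ → GTree S ar) (t : ℕ) : GTree S ar :=
  if h : t < i then ch ⟨t, h.trans i.2⟩
  else if t ≤ i + k then g (t - i)
  else if h : t - k < ar s then ch ⟨t - k, h⟩ else g t

lemma substC_nodeCtx {s : S} {ch : Fin (ar s) → GTree S ar} {k j : ℕ} {ζ : Ctx S ar}
    (hζ : IsContext (k + 1) ζ) (hj : j < k + 1) (i : Fin (ar s)) (g : ℕ → GTree S ar)
    (X : GTree S ar) :
    substC (Function.update (nodeSides ch i k g) (i + j) X) (nodeCtx s i k ζ) =
      node s (Function.update ch i (substC (Function.update g j X) ζ)) := by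
  rw [nodeCtx, substC_node_inl]
  refine congrArg (node s) (funext fun i' => ?_)
  rcases lt_trichotomy i'.1 i.1 with h | h | h
  · rw [if_pos h, substC_var, Function.update_of_ne (by omega),
      Function.update_of_ne (Fin.ne_of_val_ne h.ne), nodeSides, dif_pos h]
  · obtain rfl : i' = i := Fin.ext h
    rw [if_neg (lt_irrefl _), if_pos rfl, Function.update_self, substC_shiftVars]
    refine substC_congr ζ fun t ht => ?_
    rw [isContext_iff.1 hζ, List.mem_range] at ht
    by_cases htj : t = j
    · simp [htj, add_comm]
    · rw [Function.update_of_ne (by omega), Function.update_of_ne htj, nodeSides,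
        dif_neg (by omega), if_pos (by omega), Nat.add_sub_cancel]
  · rw [if_neg (by omega), if_neg (by omega), substC_var, Function.update_of_ne (by omega),
      Function.update_of_ne (Fin.ne_of_val_ne h.ne'), nodeSides, dif_neg (by omega),
      if_neg (by omega), dif_pos (by omega)]
    simp

def LabelsIn {L : Type} {arL : L → ℕ} (F : Set L) : GTree L arL → Prop
  | node s c => s ∈ F ∧ ∀ i, LabelsIn F (c i)

lemma finite_setOf_height_lt_labelsIn {L : Type} {arL : L → ℕ} {F : Set L} (hF : F.Finite)
    (h : ℕ) : {t : GTree L arL | t.height < h ∧ t.LabelsIn F}.Finite := by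
  induction h with
  | zero => simp
  | succ h ih =>
    have := hF.to_subtype
    have := ih.to_subtype
    refine (Set.finite_range fun z : Σ s : F, Fin (arL s) →
        {t : GTree L arL | t.height < h ∧ t.LabelsIn F} =>
      node z.1.1 fun i => (z.2 i).1).subset ?_
    rintro ⟨s, c⟩ ⟨hh, hs, hc⟩
    refine ⟨⟨⟨s, hs⟩, fun i => ⟨c i, ?_, hc i⟩⟩, rfl⟩
    have := Finset.le_sup (f := fun i => (c i).height + 1) (Finset.mem_univ i)
    rw [height_node] at hh
    omega

lemma labelsIn_of_vars_lt {B : ℕ} (ζ : Ctx S ar) (h : ∀ t ∈ ζ.vars, t < B) :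
    ζ.LabelsIn (Set.range (Sum.inl : S → S ⊕ ℕ) ∪ Sum.inr '' Set.Iio B) := by
  induction ζ with
  | node a c ih =>
    cases a with
    | inl s =>
      exact ⟨Or.inl ⟨s, rfl⟩, fun i => ih i fun t ht => h t (mem_vars_node_inl (c := c) i ht)⟩
    | inr j => exact ⟨Or.inr ⟨j, h j (by simp), rfl⟩, fun i => Fin.elim0 i⟩

lemma length_vars_le [Fintype S] (ζ : Ctx S ar) :
    ζ.vars.length ≤ (Finset.univ.sup ar + 1) ^ ζ.height := by
  set b := Finset.univ.sup ar + 1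
  induction ζ with
  | node a c ih =>
    cases a with
    | inr j => simpa using Nat.one_le_pow _ _ (Nat.succ_pos _)
    | inl s =>
      have hchild : ∀ i, (c i).vars.length * b ≤ b ^ (node (Sum.inl s) c).height := fun i =>
        calc (c i).vars.length * b ≤ b ^ ((c i).height + 1) :=
              pow_succ b _ ▸ Nat.mul_le_mul_right b (ih i)
          _ ≤ _ := Nat.pow_le_pow_right (Nat.succ_pos _)
              (Finset.le_sup (f := fun i => (c i).height + 1) (Finset.mem_univ i))
      refine Nat.le_of_mul_le_mul_right ?_ (Nat.succ_pos (Finset.univ.sup ar))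
      calc (node (Sum.inl s) c).vars.length * b
          = ∑ i, (c i).vars.length * b := by
            rw [vars_node_inl, List.length_flatten, List.map_map, ← Finset.sum_mul,
              ← List.sum_ofFn, List.ofFn_eq_map]
            rfl
        _ ≤ ∑ _i : Fin (ar s), b ^ (node (Sum.inl s) c).height :=
            Finset.sum_le_sum fun i _ => hchild i
        _ ≤ b ^ (node (Sum.inl s) c).height * b := by
            rw [Finset.sum_const, Finset.card_univ, Fintype.card_fin, smul_eq_mul, mul_comm]
            exact Nat.mul_le_mul_left _ (Nat.lt_succ_of_le (Finset.le_sup (Finset.mem_univ s))).le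

lemma finite_setOf_isContext [Fintype S] (h : ℕ) :
    {ζj : Ctx S ar × ℕ | ζj.1.height ≤ h ∧ ∃ k, IsContext k ζj.1 ∧ ζj.2 < k}.Finite := by
  set B := (Finset.univ.sup ar + 1) ^ h
  have hB : ∀ ζ : Ctx S ar, ∀ k, ζ.height ≤ h → IsContext k ζ → k ≤ B := fun ζ k hh hk =>
    calc k = ζ.vars.length := by rw [isContext_iff.1 hk, List.length_range]
      _ ≤ _ := length_vars_le ζ
      _ ≤ B := Nat.pow_le_pow_right (Nat.succ_pos _) hh
  refine ((finite_setOf_height_lt_labelsIn ((Set.finite_range Sum.inl).union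
    ((Set.finite_Iio B).image Sum.inr)) (h + 1)).prod (Set.finite_Iio B)).subset ?_
  rintro ⟨ζ, j⟩ ⟨hh, k, hk, hj⟩
  refine ⟨⟨Nat.lt_succ_of_le hh, labelsIn_of_vars_lt ζ fun t ht => ?_⟩, ?_⟩
  · rw [isContext_iff.1 hk, List.mem_range] at ht
    exact ht.trans_le (hB ζ k hh hk)
  · exact hj.trans_le (hB ζ k hh hk)

end GTree

lemma update_eq_slot {S : Type} {ar : S → ℕ} (g : ℕ → GTree S ar) (j : ℕ) (X : GTree S ar) :
    Function.update g j X = slot (fun t => if t < j then g t else g (t + 1)) j X := by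
  funext t
  simp only [Function.update_apply, slot]
  split_ifs <;> first | rfl | omega | exact congrArg g (by omega)

namespace GPTA

open GTree

variable {S : Type} {ar : S → ℕ} {m : ℕ} {A : GPTA S ar m}

/-- A run of `A` kept as data, so that its states can be read off at every position. -/
inductive RunData (A : GPTA S ar m) : A.Q → GTree S ar → (Fin m → ℕ) → Type where
  | node {q : A.Q} {s : S} {d : Fin m → ℕ} {f : Fin (ar s) → A.Q}
      {c : Fin (ar s) → GTree S ar} {v : Fin (ar s) → Fin m → ℕ}
      (ht : A.trans q s d f) (hc : ∀ i, RunData A (f i) (c i) (v i)) :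
      RunData A q (.node s c) (d + ∑ i, v i)

theorem RunData.toRun : ∀ {q ξ v}, A.RunData q ξ v → A.Run q ξ v
  | _, _, _, .node ht hc => .node ht fun i => (hc i).toRun

lemma Run.nonempty_runData {q : A.Q} {ξ : GTree S ar} {v : Fin m → ℕ} (h : A.Run q ξ v) :
    Nonempty (A.RunData q ξ v) := by
  induction h with
  | node ht _ ih => exact (Classical.nonempty_pi.2 ih).map (RunData.node ht)

structure SubRun (A : GPTA S ar m) where
  q : A.Q
  t : GTree S ar
  v : Fin m → ℕ
  run : A.RunData q t v

def RunData.subRun : ∀ {q ξ v}, A.RunData q ξ v → List ℕ → Option A.SubRun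
  | q, ξ, v, D, [] => some ⟨q, ξ, v, D⟩
  | _, _, _, .node (s := s) _ hc, i :: ρ => if h : i < ar s then (hc ⟨i, h⟩).subRun ρ else none

variable {q : A.Q} {ξ : GTree S ar} {v : Fin m → ℕ}

@[simp] lemma RunData.subRun_nil (D : A.RunData q ξ v) : D.subRun [] = some ⟨q, ξ, v, D⟩ := by
  cases D; rfl

lemma RunData.subRun_node_cons {s : S} {d : Fin m → ℕ} {f : Fin (ar s) → A.Q}
    {c : Fin (ar s) → GTree S ar} {vs : Fin (ar s) → Fin m → ℕ}
    (ht : A.trans q s d f) (hc : ∀ i, A.RunData (f i) (c i) (vs i)) (i : ℕ) (ρ : List ℕ) :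
    (RunData.node ht hc).subRun (i :: ρ) =
      if h : i < ar s then (hc ⟨i, h⟩).subRun ρ else none := rfl

lemma RunData.subAt_eq_of_subRun_eq {ρ : List ℕ} (D : A.RunData q ξ v) {s' : A.SubRun}
    (h : D.subRun ρ = some s') : ξ.subAt ρ = some s'.t := by
  induction ρ generalizing q ξ v with
  | nil => rw [subRun_nil, Option.some.injEq] at h; simp [← h]
  | cons i ρ ih =>
    obtain ⟨ht, hc⟩ := D
    rw [subRun_node_cons] at h
    rw [subAt_cons]
    split_ifs at h ⊢
    exact ih _ h

lemma RunData.exists_subRun_eq {ρ : List ℕ} (D : A.RunData q ξ v) {u : GTree S ar}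
    (h : ξ.subAt ρ = some u) : ∃ s' : A.SubRun, D.subRun ρ = some s' ∧ s'.t = u := by
  induction ρ generalizing q ξ v with
  | nil => exact ⟨_, subRun_nil D, by simpa [eq_comm] using h⟩
  | cons i ρ ih =>
    obtain ⟨ht, hc⟩ := D
    rw [subAt_cons] at h
    rw [subRun_node_cons]
    split_ifs at h ⊢
    exact ih _ h

lemma RunData.subRun_append (ρ σ : List ℕ) (D : A.RunData q ξ v) :
    D.subRun (ρ ++ σ) = (D.subRun ρ).bind fun s' => s'.run.subRun σ := by
  induction ρ generalizing q ξ v with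
  | nil => simp
  | cons i ρ ih =>
    obtain ⟨ht, hc⟩ := D
    rw [List.cons_append, subRun_node_cons, subRun_node_cons]
    split_ifs
    · exact ih _
    · rfl

/-- `F` acts like a one-hole context carrying a run from `q` that reaches the hole in state
`q'`; the positions outside the hole contribute `c` to the Parikh image. -/
def ContextRun (A : GPTA S ar m) (q : A.Q) (F : GTree S ar → GTree S ar) (q' : A.Q)
    (c : Fin m → ℕ) : Prop :=
  ∀ w vw, A.Run q' w vw → A.Run q (F w) (c + vw)

def ContextRun₂ (A : GPTA S ar m) (q : A.Q) (F : GTree S ar → GTree S ar → GTree S ar)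
    (q₁ q₂ : A.Q) (c : Fin m → ℕ) : Prop :=
  ∀ w₁ v₁ w₂ v₂, A.Run q₁ w₁ v₁ → A.Run q₂ w₂ v₂ → A.Run q (F w₁ w₂) (c + v₁ + v₂)

variable {q' q'' q₁ q₂ : A.Q} {c c' : Fin m → ℕ}

lemma ContextRun.comp {F G : GTree S ar → GTree S ar} (hF : A.ContextRun q F q' c)
    (hG : A.ContextRun q' G q'' c') : A.ContextRun q (F ∘ G) q'' (c + c') := fun w vw hw =>
  add_assoc c c' vw ▸ hF _ _ (hG w vw hw)

lemma ContextRun.comp₂ {F : GTree S ar → GTree S ar} {G : GTree S ar → GTree S ar → GTree S ar}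
    (hF : A.ContextRun q F q' c) (hG : A.ContextRun₂ q' G q₁ q₂ c') :
    A.ContextRun₂ q (fun w₁ w₂ => F (G w₁ w₂)) q₁ q₂ (c + c') := fun w₁ v₁ w₂ v₂ h₁ h₂ => by
  simpa only [add_assoc] using hF _ _ (hG w₁ v₁ w₂ v₂ h₁ h₂)

lemma ContextRun₂.comp {F : GTree S ar → GTree S ar → GTree S ar} {G₁ G₂ : GTree S ar → GTree S ar}
    {q₁' q₂' : A.Q} {c₁ c₂ : Fin m → ℕ} (hF : A.ContextRun₂ q F q₁ q₂ c)
    (h₁ : A.ContextRun q₁ G₁ q₁' c₁) (h₂ : A.ContextRun q₂ G₂ q₂' c₂) :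
    A.ContextRun₂ q (fun w₁ w₂ => F (G₁ w₁) (G₂ w₂)) q₁' q₂' (c + c₁ + c₂) :=
  fun w₁ v₁ w₂ v₂ hw₁ hw₂ => by
    have := hF _ _ _ _ (h₁ w₁ v₁ hw₁) (h₂ w₂ v₂ hw₂)
    rwa [show c + (c₁ + v₁) + (c₂ + v₂) = c + c₁ + c₂ + v₁ + v₂ by abel] at this

section node

variable {s : S} {d : Fin m → ℕ} {f : Fin (ar s) → A.Q} {ch : Fin (ar s) → GTree S ar}
  {vs : Fin (ar s) → Fin m → ℕ}

lemma run_update (hc : ∀ i, A.Run (f i) (ch i) (vs i)) {k : Fin (ar s)} {w : GTree S ar}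
    {vw : Fin m → ℕ} (hw : A.Run (f k) w vw) (i : Fin (ar s)) :
    A.Run (f i) (Function.update ch k w i) (Function.update vs k vw i) := by
  by_cases hik : i = k
  · subst hik; simpa using hw
  · simpa [hik] using hc i

lemma contextRun_node_update (ht : A.trans q s d f) (hc : ∀ i, A.Run (f i) (ch i) (vs i))
    (k : Fin (ar s)) :
    A.ContextRun q (fun w => .node s (Function.update ch k w)) (f k)
      (d + ∑ i ∈ Finset.univ.erase k, vs i) := fun w vw hw => by
  have := Run.node ht (run_update hc hw)
  rwa [Finset.sum_update_of_mem (Finset.mem_univ k), ← Finset.erase_eq, add_comm vw,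
    ← add_assoc] at this

lemma contextRun₂_node_update (ht : A.trans q s d f) (hc : ∀ i, A.Run (f i) (ch i) (vs i))
    {k₁ k₂ : Fin (ar s)} (hk : k₁ ≠ k₂) :
    A.ContextRun₂ q (fun w₁ w₂ => .node s (Function.update (Function.update ch k₁ w₁) k₂ w₂))
      (f k₁) (f k₂) (d + ∑ i ∈ (Finset.univ.erase k₂).erase k₁, vs i) :=
  fun w₁ v₁ w₂ v₂ h₁ h₂ => by
    have := contextRun_node_update ht (run_update hc h₁) k₂ w₂ v₂ h₂
    rwa [Finset.sum_update_of_mem (Finset.mem_erase.2 ⟨hk, Finset.mem_univ k₁⟩),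
      ← Finset.erase_eq, add_comm v₁, ← add_assoc] at this

end node

lemma RunData.contextRun_replaceAt {ρ : List ℕ} (D : A.RunData q ξ v) {s' : A.SubRun}
    (h : D.subRun ρ = some s') : ∃ c, v = c + s'.v ∧ A.ContextRun q (ξ.replaceAt ρ) s'.q c := by
  induction ρ generalizing q ξ v with
  | nil =>
    rw [subRun_nil, Option.some.injEq] at h
    subst h
    exact ⟨0, (zero_add v).symm, fun w vw hw => by simpa using hw⟩
  | cons i ρ ih =>
    cases D with | @node _ s d f ch vs ht hc => ?_
    rw [subRun_node_cons] at h
    split_ifs at h with hi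
    obtain ⟨c, hv, hF⟩ := ih _ h
    refine ⟨d + ∑ j ∈ Finset.univ.erase ⟨i, hi⟩, vs j + c, ?_, fun w vw hw => ?_⟩
    · rw [← Finset.add_sum_erase _ _ (Finset.mem_univ ⟨i, hi⟩), hv]
      abel
    · rw [replaceAt_cons, dif_pos hi]
      exact (contextRun_node_update ht (fun j => (hc j).toRun) ⟨i, hi⟩).comp hF w vw hw

lemma RunData.contextRun₂_replaceAt {π σ τ : List ℕ} {x y : ℕ} (hxy : x ≠ y)
    (D : A.RunData q ξ v) {s₁ s₂ : A.SubRun} (h₁ : D.subRun (π ++ x :: σ) = some s₁)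
    (h₂ : D.subRun (π ++ y :: τ) = some s₂) :
    ∃ c, v = c + s₁.v + s₂.v ∧ A.ContextRun₂ q
      (fun w₁ w₂ => (ξ.replaceAt (π ++ x :: σ) w₁).replaceAt (π ++ y :: τ) w₂) s₁.q s₂.q c := by
  induction π generalizing q ξ v with
  | nil =>
    cases D with | @node _ s d f ch vs ht hc => ?_
    rw [List.nil_append, subRun_node_cons] at h₁ h₂
    split_ifs at h₁ with hx
    split_ifs at h₂ with hy
    obtain ⟨c₁, hv₁, hF₁⟩ := (hc _).contextRun_replaceAt h₁
    obtain ⟨c₂, hv₂, hF₂⟩ := (hc _).contextRun_replaceAt h₂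
    have hk : (⟨x, hx⟩ : Fin (ar s)) ≠ ⟨y, hy⟩ := fun e => hxy (congrArg Fin.val e)
    refine ⟨d + ∑ i ∈ (Finset.univ.erase ⟨y, hy⟩).erase ⟨x, hx⟩, vs i + c₁ + c₂, ?_,
      fun w₁ v₁ w₂ v₂ hw₁ hw₂ => ?_⟩
    · rw [← Finset.add_sum_erase _ _ (Finset.mem_univ ⟨y, hy⟩),
        ← Finset.add_sum_erase _ _ (Finset.mem_erase.2 ⟨hk, Finset.mem_univ _⟩), hv₁, hv₂]
      abel
    · beta_reduce
      rw [List.nil_append, List.nil_append, replaceAt_cons, dif_pos hx, replaceAt_cons,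
        dif_pos hy, Function.update_of_ne hk.symm]
      exact (contextRun₂_node_update ht (fun i => (hc i).toRun) hk).comp hF₁ hF₂
        w₁ v₁ w₂ v₂ hw₁ hw₂
  | cons z π ih =>
    cases D with | @node _ s d f ch vs ht hc => ?_
    rw [List.cons_append, subRun_node_cons] at h₁ h₂
    split_ifs at h₁ h₂ with hz
    obtain ⟨c, hv, hF⟩ := ih (hc _) h₁ h₂
    refine ⟨d + ∑ i ∈ Finset.univ.erase ⟨z, hz⟩, vs i + c, ?_, fun w₁ v₁ w₂ v₂ hw₁ hw₂ => ?_⟩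
    · rw [← Finset.add_sum_erase _ _ (Finset.mem_univ ⟨z, hz⟩), hv]
      abel
    · beta_reduce
      rw [List.cons_append, List.cons_append, replaceAt_cons, dif_pos hz, replaceAt_cons,
        dif_pos hz, Function.update_self, Function.update_idem]
      exact (contextRun_node_update ht (fun i => (hc i).toRun) ⟨z, hz⟩).comp₂ hF
        w₁ v₁ w₂ v₂ hw₁ hw₂

/-- `s.t` is `ζ` with its hole `x_{j+1}` filled by `s'.t` and its other variables by fixed side
trees, and runs from the state of `s'` extend through `ζ` to runs from the state of `s`. -/
def IsSpine (s s' : A.SubRun) (j : ℕ) (ζ : Ctx S ar) : Prop :=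
  (∃ k, IsContext (k + 1) ζ ∧ j < k + 1) ∧ ∃ (g : ℕ → GTree S ar) (c : Fin m → ℕ),
    s.t = substC (Function.update g j s'.t) ζ ∧ s.v = c + s'.v ∧
    A.ContextRun s.q (fun w => substC (Function.update g j w) ζ) s'.q c

lemma isSpine_refl (s : A.SubRun) : IsSpine s s 0 (var 0) :=
  ⟨⟨0, rfl, Nat.zero_lt_one⟩, fun _ => s.t, 0, by simp, by simp, fun w vw hw => by simpa using hw⟩

lemma IsSpine.node {s : S} {d : Fin m → ℕ} {f : Fin (ar s) → A.Q} {ch : Fin (ar s) → GTree S ar}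
    {vs : Fin (ar s) → Fin m → ℕ} (ht : A.trans q s d f) (hc : ∀ i, A.RunData (f i) (ch i) (vs i))
    {i : Fin (ar s)} {s' : A.SubRun} {j : ℕ} {ζ : Ctx S ar}
    (h : IsSpine ⟨f i, ch i, vs i, hc i⟩ s' j ζ) :
    ∃ ζ' : Ctx S ar, ζ'.height = ζ.height + 1 ∧
      IsSpine ⟨q, .node s ch, d + ∑ i, vs i, .node ht hc⟩ s' (i + j) ζ' := by
  obtain ⟨⟨k, hζ, hj⟩, g, c, hu, hv, hF⟩ := h
  have := i.2
  refine ⟨nodeCtx s i k ζ, height_nodeCtx ζ i.2,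
    ⟨k + (ar s - 1), by convert isContext_nodeCtx i.2 hζ using 1; omega, by omega⟩,
    nodeSides ch i k g, d + ∑ i' ∈ Finset.univ.erase i, vs i' + c, ?_, ?_, fun w vw hw => ?_⟩
  · dsimp only at hu ⊢
    rw [substC_nodeCtx hζ hj, ← hu, Function.update_eq_self]
  · dsimp only at hv ⊢
    rw [← Finset.add_sum_erase _ _ (Finset.mem_univ i), hv]
    abel
  · beta_reduce
    rw [substC_nodeCtx hζ hj]
    exact (contextRun_node_update ht (fun i => (hc i).toRun) i).comp hF w vw hw

lemma RunData.exists_spines (n : ℕ) (D : A.RunData q ξ v) (hn : n ≤ ξ.height) :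
    ∃ (π : ℕ → List ℕ) (G : ℕ → A.SubRun), G 0 = ⟨q, ξ, v, D⟩ ∧
      (∀ e ≤ n, D.subRun (π e) = some (G e)) ∧
      ∀ e₁ e₂, e₁ ≤ e₂ → e₂ ≤ n → ∃ j ζ, ζ.height = e₂ - e₁ ∧ IsSpine (G e₁) (G e₂) j ζ := by
  induction n generalizing q ξ v with
  | zero =>
    refine ⟨fun _ => [], fun _ => ⟨q, ξ, v, D⟩, rfl, fun e _ => subRun_nil D, ?_⟩
    intro e₁ e₂ _ _
    exact ⟨0, var 0, by rw [height_var]; omega, isSpine_refl _⟩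
  | succ n ih =>
    cases D with | @node _ s d f ch vs ht hc => ?_
    obtain ⟨i, -, hi⟩ := (Finset.le_sup_iff (Nat.succ_pos n)).1 hn
    obtain ⟨π, G, hG0, hsub, hspine⟩ := ih (hc i) (by simpa using hi)
    refine ⟨fun | 0 => [] | e + 1 => i.1 :: π e, fun | 0 => ⟨q, _, _, .node ht hc⟩ | e + 1 => G e,
      rfl, ?_, ?_⟩
    · rintro (_ | e) he
      · exact subRun_nil _
      · rw [subRun_node_cons, dif_pos i.2]
        exact hsub e (by omega)
    · rintro (_ | e₁) (_ | e₂) h₁₂ h₂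
      · exact ⟨0, var 0, by simp, isSpine_refl _⟩
      · obtain ⟨j, ζ, hζ, hsp⟩ := hspine 0 e₂ (Nat.zero_le _) (by omega)
        rw [hG0] at hsp
        obtain ⟨ζ', hζ', hsp'⟩ := hsp.node ht hc
        exact ⟨_, ζ', by omega, hsp'⟩
      · omega
      · obtain ⟨j, ζ, hζ, hsp⟩ := hspine e₁ e₂ (by omega) (by omega)
        exact ⟨j, ζ, by omega, hsp⟩

lemma RunData.exists_loop [Fintype A.Q] (D : A.RunData q ξ v) {ρ : List ℕ} {u : GTree S ar}
    (hu : ξ.subAt ρ = some u) (hh : Fintype.card A.Q ≤ u.height) :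
    ∃ (σ : List ℕ) (s s' : A.SubRun) (j : ℕ) (ζ : Ctx S ar), D.subRun (ρ ++ σ) = some s ∧
      s'.q = s.q ∧ 0 < ζ.height ∧ ζ.height ≤ Fintype.card A.Q ∧ IsSpine s s' j ζ := by
  obtain ⟨s₀, hs₀, rfl⟩ := D.exists_subRun_eq hu
  obtain ⟨σ, G, -, hsub, hspine⟩ := s₀.run.exists_spines _ hh
  obtain ⟨e₁, e₂, hne, hq⟩ := Fintype.exists_ne_map_eq_of_card_lt
    (fun e : Fin (Fintype.card A.Q + 1) => (G e).q) (by simp)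
  wlog hlt : e₁ < e₂ generalizing e₁ e₂
  · exact this e₂ e₁ hne.symm hq.symm (lt_of_le_of_ne (not_lt.1 hlt) hne.symm)
  obtain ⟨j, ζ, hζ, hsp⟩ := hspine e₁ e₂ hlt.le (by omega)
  refine ⟨σ e₁, G e₁, G e₂, j, ζ, ?_, hq.symm, by omega, by omega, hsp⟩
  rw [subRun_append, hs₀]
  exact hsub e₁ (by omega)

lemma ContextRun₂.run_exchange {F : GTree S ar → GTree S ar → GTree S ar}
    {Z₁ Z₂ : GTree S ar → GTree S ar} {u₁ u₂ : GTree S ar} {c c₁ c₂ v₁ v₂ : Fin m → ℕ}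
    (hF : A.ContextRun₂ q F q' q' c) (hZ₁ : A.ContextRun q' Z₁ q' c₁)
    (hZ₂ : A.ContextRun q' Z₂ q' c₂) (hu₁ : A.Run q' u₁ v₁) (hu₂ : A.Run q' u₂ v₂) :
    A.Run q (F u₁ (Z₁ (Z₂ u₂))) (c + (c₁ + v₁) + (c₂ + v₂)) ∧
      A.Run q (F (Z₁ (Z₂ u₁)) u₂) (c + (c₁ + v₁) + (c₂ + v₂)) := by
  constructor
  · convert hF _ _ _ _ hu₁ (hZ₁ _ _ (hZ₂ _ _ hu₂)) using 1
    abel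
  · convert hF _ _ _ _ (hZ₁ _ _ (hZ₂ _ _ hu₁)) hu₂ using 1
    abel

lemma RunData.exists_exchange_of_branchesLeft (D : A.RunData q ξ v) {τ₁ τ₂ : List ℕ}
    (hτ : BranchesLeft τ₁ τ₂) {s₁ s₂ s₁' s₂' : A.SubRun} {j : ℕ} {ζ : Ctx S ar}
    (h₁ : D.subRun τ₁ = some s₁) (h₂ : D.subRun τ₂ = some s₂) (hsp₁ : IsSpine s₁ s₁' j ζ)
    (hsp₂ : IsSpine s₂ s₂' j ζ) (hq : s₂.q = s₁.q) (hq₁ : s₁'.q = s₁.q) (hq₂ : s₂'.q = s₂.q) :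
    ∃ (ζ₁ : Ctx S ar) (sv tv : ℕ → GTree S ar), IsContext 2 ζ₁ ∧
      ξ = substC (pick2 (substC (slot sv j s₁'.t) ζ) (substC (slot tv j s₂'.t) ζ)) ζ₁ ∧
      A.Run q (substC (pick2 s₁'.t (substC (slot sv j (substC (slot tv j s₂'.t) ζ)) ζ)) ζ₁) v ∧
      A.Run q (substC (pick2 (substC (slot sv j (substC (slot tv j s₁'.t) ζ)) ζ) s₂'.t) ζ₁) v := by
  obtain ⟨π, x, y, σ, τ, hxy, rfl, rfl⟩ := hτ
  have ha := D.subAt_eq_of_subRun_eq h₁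
  have hb := D.subAt_eq_of_subRun_eq h₂
  obtain ⟨c, hv, hF⟩ := D.contextRun₂_replaceAt hxy.ne h₁ h₂
  obtain ⟨-, g₁, c₁, ht₁, hv₁, hZ₁⟩ := hsp₁
  obtain ⟨-, g₂, c₂, ht₂, hv₂, hZ₂⟩ := hsp₂
  rw [hq] at hF
  rw [hq₁] at hZ₁
  rw [hq₂, hq] at hZ₂
  obtain ⟨hrun₁, hrun₂⟩ := hF.run_exchange hZ₁ hZ₂ (hq₁ ▸ s₁'.run.toRun)
    ((hq₂.trans hq) ▸ s₂'.run.toRun)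
  rw [← hv₁, ← hv₂, ← hv] at hrun₁ hrun₂
  refine ⟨ξ.holesAt _ _, fun t => if t < j then g₁ t else g₁ (t + 1),
    fun t => if t < j then g₂ t else g₂ (t + 1), vars_holesAt hxy ha hb, ?_⟩
  simp only [← update_eq_slot, substC_holesAt _ hxy ha hb, pick2, if_pos, one_ne_zero, if_false]
  refine ⟨?_, hrun₁, hrun₂⟩
  rw [← ht₁, ← ht₂, replaceAt_eq_self ha, replaceAt_eq_self hb]

lemma RunData.exists_exchange (D : A.RunData q ξ v) {τ₁ τ₂ : List ℕ} (h₁₂ : ¬τ₁ <+: τ₂)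
    (h₂₁ : ¬τ₂ <+: τ₁) {s₁ s₂ s₁' s₂' : A.SubRun} {j : ℕ} {ζ : Ctx S ar}
    (h₁ : D.subRun τ₁ = some s₁) (h₂ : D.subRun τ₂ = some s₂) (hsp₁ : IsSpine s₁ s₁' j ζ)
    (hsp₂ : IsSpine s₂ s₂' j ζ) (hq : s₂.q = s₁.q) (hq₁ : s₁'.q = s₁.q) (hq₂ : s₂'.q = s₂.q) :
    ∃ (ζ₁ : Ctx S ar) (sv tv : ℕ → GTree S ar) (u₁ u₂ : GTree S ar), IsContext 2 ζ₁ ∧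
      ξ = substC (pick2 (substC (slot sv j u₁) ζ) (substC (slot tv j u₂) ζ)) ζ₁ ∧
      A.Run q (substC (pick2 u₁ (substC (slot sv j (substC (slot tv j u₂) ζ)) ζ)) ζ₁) v ∧
      A.Run q (substC (pick2 (substC (slot sv j (substC (slot tv j u₁) ζ)) ζ) u₂) ζ₁) v := by
  rcases branchesLeft_or_branchesLeft h₁₂ h₂₁ with hτ | hτ
  · obtain ⟨ζ₁, sv, tv, h⟩ := D.exists_exchange_of_branchesLeft hτ h₁ h₂ hsp₁ hsp₂ hq hq₁ hq₂
    exact ⟨ζ₁, sv, tv, _, _, h⟩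
  · obtain ⟨ζ₁, sv, tv, h⟩ :=
      D.exists_exchange_of_branchesLeft hτ h₂ h₁ hsp₂ hsp₁ hq.symm hq₂ hq₁
    exact ⟨ζ₁, sv, tv, _, _, h⟩

end GPTA

theorem gpta_exchange {S : Type} [Fintype S] {ar : S → ℕ} {m : ℕ}
    (A : GPTA S ar m) (L : Set (GTree S ar)) (hL : L = A.Lang) :
    ∃ l p : ℕ, 0 < l ∧ 0 < p ∧
      ∀ ξ ∈ L,
        (∃ ρ : Fin l → List ℕ,
          (∀ i j, i ≠ j → ¬ (ρ i <+: ρ j)) ∧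
          (∀ i, ∃ u, ξ.subAt (ρ i) = some u ∧ p ≤ u.height)) →
        ∃ (k : ℕ) (ζ1 ζ2 : Ctx S ar) (sv tv : ℕ → GTree S ar)
          (u1 u2 : GTree S ar) (j : ℕ),
          IsContext 2 ζ1 ∧ IsContext (k + 1) ζ2 ∧
          0 < ζ2.height ∧ ζ2.height < p ∧ j < k + 1 ∧
          ξ = substC (pick2 (substC (slot sv j u1) ζ2) (substC (slot tv j u2) ζ2)) ζ1 ∧
          substC (pick2 u1 (substC (slot sv j (substC (slot tv j u2) ζ2)) ζ2)) ζ1 ∈ L ∧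
          substC (pick2 (substC (slot sv j (substC (slot tv j u1) ζ2)) ζ2) u2) ζ1 ∈ L := by
  classical
  subst hL
  let _ : Fintype A.Q := A.finQ
  have hfin := (Set.finite_univ (α := A.Q)).prod
    (GTree.finite_setOf_isContext (S := S) (ar := ar) (Fintype.card A.Q))
  refine ⟨hfin.toFinset.card + 1, Fintype.card A.Q + 1, Nat.succ_pos _, Nat.succ_pos _, ?_⟩
  rintro ξ ⟨v, hrun, hvC⟩ ⟨ρ, hindep, htall⟩
  obtain ⟨D⟩ := hrun.nonempty_runData
  choose σ s s' j ζ hs hq hpos hle hsp using fun i =>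
    (htall i).elim fun _ ⟨hu, hh⟩ => D.exists_loop hu (by omega)
  obtain ⟨i₁, -, i₂, -, hne, hkey⟩ := Finset.exists_ne_map_eq_of_card_lt_of_maps_to
    (s := Finset.univ) (t := hfin.toFinset) (f := fun i => ((s i).q, ζ i, j i)) (by simp)
    fun i _ => by
      obtain ⟨k, hk, hjk⟩ := (hsp i).1
      simpa using ⟨hle i, k + 1, hk, hjk⟩
  obtain ⟨hq₁₂, hζ, hj⟩ : (s i₁).q = (s i₂).q ∧ ζ i₁ = ζ i₂ ∧ j i₁ = j i₂ := by
    simpa using hkey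
  obtain ⟨k, hk, hjk⟩ := (hsp i₁).1
  obtain ⟨ζ₁, sv, tv, u₁, u₂, hζ₁, hξ, h₂, h₃⟩ := D.exists_exchange
    (List.not_prefix_append_of_not_prefix (hindep _ _ hne) (hindep _ _ hne.symm))
    (List.not_prefix_append_of_not_prefix (hindep _ _ hne.symm) (hindep _ _ hne))
    (hs i₁) (hs i₂) (hsp i₁) (hζ ▸ hj ▸ hsp i₂) hq₁₂.symm (hq i₁) (hq i₂)
  exact ⟨k, ζ₁, ζ i₁, sv, tv, u₁, u₂, j i₁, hζ₁, hk, hpos i₁, by linarith [hle i₁], hjk, hξ,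
    ⟨v, h₂, hvC⟩, ⟨v, h₃, hvC⟩⟩
end

section
/- Fix the 3-PTA A constructed from a two-counter machine M as in the undecidability reduction. For all s₁, s₂, l ∈ ℕ: the configuration (<₁, (s₁,s₂,l)) admits a computation (<₁,(s₁,s₂,l)) ⇒*_A γⁿ((<₁,(j,j,j))) ⇒_A γⁿ(α) for some n, j ∈ ℕ if and only if l ≤ s₁, where the transitions available from state <₁ are <₁ → γ(<₁(d)) for d ∈ {(0,1,0),(0,0,1),(1,0,1)} and <₁ → α, and leaf transitions require the counter vector to lie in C = {(i,i,i) | i ∈ ℕ}. -/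
/-! Observation about the 3-PTA A from the 2CM reduction: from state <₁ with counter
triple (s₁,s₂,l), the available γ-transitions add a vector d ∈ {(0,1,0),(0,0,1),(1,0,1)}
to the counters, and the leaf transition <₁ → α applies exactly to triples in
C = {(j,j,j) | j ∈ ℕ}. Hence a computation
(<₁,(s₁,s₂,l)) ⇒* γⁿ((<₁,(j,j,j))) ⇒ γⁿ(α) exists iff l ≤ s₁. -/

/-- One γ-step of the state `<₁`: add one of the vectors (0,1,0), (0,0,1), (1,0,1). -/
def stepLt1 : ℕ × ℕ × ℕ → ℕ × ℕ × ℕ → Prop := fun v w =>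
  w = (v.1, v.2.1 + 1, v.2.2) ∨ w = (v.1, v.2.1, v.2.2 + 1) ∨
  w = (v.1 + 1, v.2.1, v.2.2 + 1)

lemma stepLt1_mono {v w : ℕ × ℕ × ℕ} (h : Relation.ReflTransGen stepLt1 v w) :
    (v.2.2 : ℤ) - v.1 ≤ (w.2.2 : ℤ) - w.1 := by
  induction h with
  | refl => exact le_refl _
  | tail _ hstep ih =>
      rcases hstep with h | h | h <;> subst h <;> simp_all <;> omega

lemma add_mid (a b c k : ℕ) :
    Relation.ReflTransGen stepLt1 (a, b, c) (a, b + k, c) := by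
  induction k with
  | zero => rfl
  | succ n ih => exact ih.tail (Or.inl rfl)

lemma add_last (a b c k : ℕ) :
    Relation.ReflTransGen stepLt1 (a, b, c) (a, b, c + k) := by
  induction k with
  | zero => rfl
  | succ n ih => exact ih.tail (Or.inr (Or.inl rfl))

lemma add_both (a b c k : ℕ) :
    Relation.ReflTransGen stepLt1 (a, b, c) (a + k, b, c + k) := by
  induction k with
  | zero => rfl
  | succ n ih => exact ih.tail (Or.inr (Or.inr rfl))

theorem lt1_verifies_guard (s1 s2 l : ℕ) :
    (∃ j : ℕ, Relation.ReflTransGen stepLt1 (s1, s2, l) (j, j, j)) ↔ l ≤ s1 := by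
  constructor
  · rintro ⟨j, h⟩
    have := stepLt1_mono h
    simp at this
    omega
  · intro hl
    rcases le_or_gt s2 s1 with h | h
    · refine ⟨s1, ?_⟩
      have h1 := add_last s1 s2 l (s1 - l)
      have h2 := add_mid s1 s2 s1 (s1 - s2)
      rw [show l + (s1 - l) = s1 by omega] at h1
      rw [show s2 + (s1 - s2) = s1 by omega] at h2
      exact h1.trans h2
    · refine ⟨s2, ?_⟩
      have h1 := add_last s1 s2 l (s1 - l)
      have h2 := add_both s1 s2 s1 (s2 - s1)
      rw [show l + (s1 - l) = s1 by omega] at h1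
      rw [show s1 + (s2 - s1) = s2 by omega] at h2
      exact h1.trans h2
end

section
/- Fix the 3-PTA A from the 2CM reduction. For all s₁, s₂, l ∈ ℕ: (=₁, (s₁,s₂,l)) ⇒*_A γⁿ((=₁,(j,j,j))) ⇒_A γⁿ(α) for some n, j ∈ ℕ if and only if s₁ = l, where state =₁ has transitions =₁ → γ(=₁(d)) for d ∈ {(1,0,1),(0,1,0)} and =₁ → α, and leaf transitions require the counter vector to be in C = {(i,i,i) | i ∈ ℕ}. -/
/-! Observation about the 3-PTA A from the 2CM reduction: from state =₁ with counter
triple (s₁,s₂,l), the available γ-transitions add a vector d ∈ {(1,0,1),(0,1,0)}, and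
the leaf transition =₁ → α applies exactly to triples in C = {(j,j,j) | j ∈ ℕ}.
Hence a computation (=₁,(s₁,s₂,l)) ⇒* γⁿ((=₁,(j,j,j))) ⇒ γⁿ(α) exists iff s₁ = l. -/

/-- One γ-step of the state `=₁`: add one of the vectors (1,0,1), (0,1,0). -/
def stepEq1 : ℕ × ℕ × ℕ → ℕ × ℕ × ℕ → Prop := fun v w =>
  w = (v.1 + 1, v.2.1, v.2.2 + 1) ∨ w = (v.1, v.2.1 + 1, v.2.2)

lemma stepEq1_invariant {v w : ℕ × ℕ × ℕ} (h : Relation.ReflTransGen stepEq1 v w) :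
    v.1 + w.2.2 = w.1 + v.2.2 := by
  induction h with
  | refl => rfl
  | tail _ hstep ih =>
    rcases hstep with h | h <;> subst h <;> simp <;> omega

lemma stepEq1_add (v : ℕ × ℕ × ℕ) (k m : ℕ) :
    Relation.ReflTransGen stepEq1 v (v.1 + k, v.2.1 + m, v.2.2 + k) := by
  induction k with
  | zero =>
    induction m with
    | zero => exact Relation.ReflTransGen.refl
    | succ m ihm => exact ihm.tail (Or.inr rfl)
  | succ k ihk => exact ihk.tail (Or.inl rfl)

theorem eq1_verifies_zero_test (s1 s2 l : ℕ) :
    (∃ j : ℕ, Relation.ReflTransGen stepEq1 (s1, s2, l) (j, j, j)) ↔ s1 = l := by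
  constructor
  · rintro ⟨j, h⟩
    have := stepEq1_invariant h
    simp at this
    omega
  · rintro rfl
    refine ⟨max s1 s2, ?_⟩
    have := stepEq1_add (s1, s2, s1) (max s1 s2 - s1) (max s1 s2 - s2)
    simpa [Nat.add_sub_cancel' (le_max_left s1 s2),
      Nat.add_sub_cancel' (le_max_right s1 s2)] using this
end

section
/- The tree language L₃ = {γⁿ(σ(γⁿ#, γⁿ#)) | n ∈ ℕ} over Σ = {σ⁽²⁾, γ⁽¹⁾, #⁽⁰⁾} is recognized by the 2-PTA with states {q₀,q₁}, constraint C = {(i,i) | i ∈ ℕ}, and transitions q₀ → γ(q₀(1,0)), q₀ → σ(q₁(0,0), q₁(0,0)), q₁ → γ(q₁(0,1)), q₁ → #, but L₃ is not recognizable by any linear PTAR. -/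
/-! ## Non-global Parikh tree automata with reset (PTAR) -/

/-- Update of a counter vector: add `d`, or reset to `0` for `↺` (`none`). -/
def updW {m : ℕ} (w : Fin m → ℕ) : Option (Fin m → ℕ) → Fin m → ℕ
  | some d => w + d
  | none => 0

structure PTAR (S : Type) (ar : S → ℕ) (m : ℕ) where
  Q : Type
  finQ : Fintype Q
  init : Q
  D : Finset (Fin m → ℕ)
  trans : Q → (s : S) → (Fin (ar s) → Q × Option (Fin m → ℕ)) → Prop
  transD : ∀ q s f, trans q s f → ∀ i d, (f i).2 = some d → d ∈ D
  C : Set (Fin m → ℕ)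
  semiC : IsSemilinear C

inductive PTAR.Acc {S : Type} {ar : S → ℕ} {m : ℕ} (A : PTAR S ar m) :
    A.Q → (Fin m → ℕ) → GTree S ar → Prop where
  | node {q : A.Q} {w : Fin m → ℕ} {s : S} {f : Fin (ar s) → A.Q × Option (Fin m → ℕ)}
      {c : Fin (ar s) → GTree S ar}
      (ht : A.trans q s f) (hC : ar s = 0 → w ∈ A.C)
      (hc : ∀ i, PTAR.Acc A (f i).1 (updW w (f i).2) (c i)) :
      PTAR.Acc A q w (.node s c)

def PTAR.Lang {S : Type} {ar : S → ℕ} {m : ℕ} (A : PTAR S ar m) : Set (GTree S ar) :=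
  {ξ | A.Acc A.init 0 ξ}

/-- A PTAR is linear if every transition passes the counter configuration to at most
one child; all other children are reset. -/
def PTAR.IsLinear {S : Type} {ar : S → ℕ} {m : ℕ} (A : PTAR S ar m) : Prop :=
  ∀ q s f, A.trans q s f → ∀ i j, (f i).2 ≠ none → (f j).2 ≠ none → i = j

/-! L₃ = {γⁿ(σ(γⁿ#,γⁿ#)) | n ∈ ℕ} is recognized by the concrete 2-PTA with states
q₀ (= `true`), q₁ (= `false`), constraint C = {(i,i) | i ∈ ℕ} and transitions
q₀ → γ(q₀(1,0)), q₀ → σ(q₁(0,0), q₁(0,0)), q₁ → γ(q₁(0,1)), q₁ → #, but L₃ is not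
recognized by any linear PTAR. -/

inductive Acc3 : Bool → ℕ → ℕ → GTree Sg arG → Prop where
  | g0 {x y : ℕ} {t} : Acc3 true (x + 1) y t → Acc3 true x y (gamT t)
  | s0 {x y : ℕ} {l r} : Acc3 false x y l → Acc3 false x y r → Acc3 true x y (sigT l r)
  | g1 {x y : ℕ} {t} : Acc3 false x (y + 1) t → Acc3 false x y (gamT t)
  | h1 {x : ℕ} : Acc3 false x x hashT

/-!
From `(q₀, x, y)` the 2-PTA accepts exactly the trees γⁿ(σ(γᵏ#, γᵏ#)) with `x + n = y + k`,
and from `(q₁, x, y)` exactly the trees γⁿ# with `x = y + n`; at `(q₀, 0, 0)` this is `L₃`.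

In a run of a linear PTAR on γⁿ(σ(γⁿ#, γⁿ#)) one child of σ is reset, so it is accepted from
some configuration `(pₙ, 0)`, and any tree accepted from `(pₙ, 0)` may replace it. There are
finitely many states, so two lengths `n₁ ≠ n₂` share `pₙ`; then γ^{n₁}(σ(γ^{n₂}#, γ^{n₁}#)) or
its mirror image is accepted, although it is not in `L₃`.
-/

theorem GTree.eq_of_node_eq {S : Type} {ar : S → ℕ} {s s' : S} {c : Fin (ar s) → GTree S ar}
    {c' : Fin (ar s') → GTree S ar} (h : GTree.node s c = .node s' c') : s = s' := by
  injection h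

theorem gamT_injective : Function.Injective gamT := fun t t' h => by
  injection h with _ hc
  exact congrFun hc 0

theorem sigT_inj_s16 {a b a' b' : GTree Sg arG} : sigT a b = sigT a' b' ↔ a = a' ∧ b = b' := by
  refine ⟨fun h => ?_, fun ⟨ha, hb⟩ => ha ▸ hb ▸ rfl⟩
  injection h with _ hc
  exact ⟨congrFun hc 0, congrFun hc 1⟩

theorem sigT_ne_gamT (a b t : GTree Sg arG) : sigT a b ≠ gamT t :=
  fun h => nomatch GTree.eq_of_node_eq h

theorem hashT_ne_gamT (t : GTree Sg arG) : hashT ≠ gamT t :=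
  fun h => nomatch GTree.eq_of_node_eq h

theorem gpow_eq_gpow_iff {n k : ℕ} {t t' : GTree Sg arG} (ht : ∀ u, t ≠ gamT u)
    (ht' : ∀ u, t' ≠ gamT u) : gpow n t = gpow k t' ↔ n = k ∧ t = t' := by
  induction n generalizing k with
  | zero => cases k <;> simp_all [gpow]
  | succ n ih => cases k <;> simp_all [gpow, Ne.symm, gamT_injective.eq_iff]

theorem gpow_sigT_mem_L3_iff {n a b : ℕ} :
    gpow n (sigT (gpow a hashT) (gpow b hashT)) ∈ L3 ↔ a = n ∧ b = n := by
  simp only [L3, Set.mem_ofPred_eq, gpow_eq_gpow_iff (sigT_ne_gamT _ _) (sigT_ne_gamT _ _),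
    sigT_inj_s16, gpow_eq_gpow_iff hashT_ne_gamT hashT_ne_gamT, and_true]
  grind

theorem acc3_sound {b : Bool} {x y : ℕ} {t : GTree Sg arG} (h : Acc3 b x y t) :
    bif b then ∃ n k, t = gpow n (sigT (gpow k hashT) (gpow k hashT)) ∧ x + n = y + k
    else ∃ n, t = gpow n hashT ∧ x = y + n := by
  induction h with
  | g0 _ ih =>
    obtain ⟨n, k, rfl, hnk⟩ := ih
    exact ⟨n + 1, k, rfl, by omega⟩
  | s0 _ _ ihl ihr =>
    obtain ⟨n, rfl, hn⟩ := ihl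
    obtain ⟨n', rfl, hn'⟩ := ihr
    obtain rfl : n = n' := by omega
    exact ⟨0, n, rfl, by omega⟩
  | g1 _ ih =>
    obtain ⟨n, rfl, hn⟩ := ih
    exact ⟨n + 1, rfl, by omega⟩
  | h1 => exact ⟨0, rfl, rfl⟩

theorem acc3_gpow_hashT (n : ℕ) {x y : ℕ} (h : x = y + n) : Acc3 false x y (gpow n hashT) := by
  induction n generalizing y with
  | zero => exact h ▸ Acc3.h1
  | succ n ih => exact Acc3.g1 (ih (by omega))

theorem acc3_gpow_sigT (n k : ℕ) {x y : ℕ} (h : x + n = y + k) :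
    Acc3 true x y (gpow n (sigT (gpow k hashT) (gpow k hashT))) := by
  induction n generalizing x with
  | zero => exact Acc3.s0 (acc3_gpow_hashT k h) (acc3_gpow_hashT k h)
  | succ n ih => exact Acc3.g0 (ih (by omega))

theorem acc3_true_zero_zero_iff_mem_L3 {ξ : GTree Sg arG} : Acc3 true 0 0 ξ ↔ ξ ∈ L3 := by
  refine ⟨fun h => ?_, fun ⟨n, hn⟩ => hn ▸ acc3_gpow_sigT n n rfl⟩
  obtain ⟨n, k, rfl, hnk⟩ := acc3_sound h
  obtain rfl : n = k := by omega
  exact ⟨n, rfl⟩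

theorem PTAR.acc_node_iff {S : Type} {ar : S → ℕ} {m : ℕ} {A : PTAR S ar m} {q : A.Q}
    {w : Fin m → ℕ} {s : S} {c : Fin (ar s) → GTree S ar} :
    A.Acc q w (.node s c) ↔ ∃ f, A.trans q s f ∧ (ar s = 0 → w ∈ A.C) ∧
      ∀ i, A.Acc (f i).1 (updW w (f i).2) (c i) :=
  ⟨fun ⟨ht, hC, hc⟩ => ⟨_, ht, hC, hc⟩, fun ⟨_, ht, hC, hc⟩ => .node ht hC hc⟩

namespace PTAR

variable {m : ℕ} {A : PTAR Sg arG m}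

theorem exists_acc_of_acc_gamT {q : A.Q} {w : Fin m → ℕ} {u : GTree Sg arG}
    (h : A.Acc q w (gamT u)) :
    ∃ q' w', A.Acc q' w' u ∧ ∀ u', A.Acc q' w' u' → A.Acc q w (gamT u') := by
  obtain ⟨f, ht, hC, hc⟩ := acc_node_iff.1 h
  refine ⟨_, _, hc (0 : Fin 1), fun u' hu' => acc_node_iff.2 ⟨f, ht, hC, ?_⟩⟩
  exact Fin.forall_fin_one.2 hu'

theorem exists_acc_of_acc_gpow (n : ℕ) {q : A.Q} {w : Fin m → ℕ} {u : GTree Sg arG}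
    (h : A.Acc q w (gpow n u)) :
    ∃ q' w', A.Acc q' w' u ∧ ∀ u', A.Acc q' w' u' → A.Acc q w (gpow n u') := by
  induction n generalizing q w with
  | zero => exact ⟨q, w, h, fun _ => id⟩
  | succ n ih =>
    obtain ⟨q₁, w₁, h₁, plug₁⟩ := exists_acc_of_acc_gamT h
    obtain ⟨q₂, w₂, h₂, plug₂⟩ := ih h₁
    exact ⟨q₂, w₂, h₂, fun u' hu' => plug₁ _ (plug₂ u' hu')⟩

theorem IsLinear.exists_reset_of_acc_sigT (hlin : A.IsLinear) {q : A.Q} {w : Fin m → ℕ}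
    {l r : GTree Sg arG} (h : A.Acc q w (sigT l r)) :
    ∃ p, (A.Acc p 0 l ∧ ∀ t, A.Acc p 0 t → A.Acc q w (sigT t r)) ∨
      (A.Acc p 0 r ∧ ∀ t, A.Acc p 0 t → A.Acc q w (sigT l t)) := by
  obtain ⟨f, ht, hC, hc⟩ : ∃ f : Fin 2 → _, A.trans q .sig f ∧ _ ∧
      ∀ i, A.Acc (f i).1 (updW w (f i).2) (![l, r] i) := acc_node_iff.1 h
  have rebuild : ∀ l' r', A.Acc (f 0).1 (updW w (f 0).2) l' → A.Acc (f 1).1 (updW w (f 1).2) r' →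
      A.Acc q w (sigT l' r') := fun l' r' hl hr =>
    acc_node_iff.2 ⟨f, ht, hC, Fin.forall_fin_two.2 ⟨hl, hr⟩⟩
  by_cases h0 : (f 0).2 = none
  · refine ⟨(f 0).1, .inl ⟨?_, fun t ht₀ => rebuild t r ?_ (hc 1)⟩⟩
    · simpa [h0, updW] using hc 0
    · simpa [h0, updW] using ht₀
  · have h1 : (f 1).2 = none := by
      by_contra h1
      exact (by decide : (0 : Fin 2) ≠ 1) (hlin q .sig f ht (0 : Fin 2) (1 : Fin 2) h0 h1)
    refine ⟨(f 1).1, .inr ⟨?_, fun t ht₁ => rebuild l t (hc 0) ?_⟩⟩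
    · simpa [h1, updW] using hc 1
    · simpa [h1, updW] using ht₁

theorem IsLinear.exists_reset_of_acc_gpow_sigT_self (hlin : A.IsLinear) (n : ℕ) {q : A.Q}
    {w : Fin m → ℕ} {u : GTree Sg arG} (h : A.Acc q w (gpow n (sigT u u))) :
    ∃ p, A.Acc p 0 u ∧ ∀ t, A.Acc p 0 t →
      A.Acc q w (gpow n (sigT t u)) ∨ A.Acc q w (gpow n (sigT u t)) := by
  obtain ⟨q', w', h', plug⟩ := exists_acc_of_acc_gpow n h
  obtain ⟨p, ⟨hp, plug_l⟩ | ⟨hp, plug_r⟩⟩ := hlin.exists_reset_of_acc_sigT h'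
  · exact ⟨p, hp, fun t ht => .inl (plug _ (plug_l t ht))⟩
  · exact ⟨p, hp, fun t ht => .inr (plug _ (plug_r t ht))⟩

end PTAR

theorem L3_pta_but_not_linear_ptar :
    (∀ ξ : GTree Sg arG, Acc3 true 0 0 ξ ↔ ξ ∈ L3) ∧
    ¬ ∃ (m : ℕ) (A : PTAR Sg arG m), A.IsLinear ∧ A.Lang = L3 := by
  refine ⟨fun ξ => acc3_true_zero_zero_iff_mem_L3, ?_⟩
  rintro ⟨m, A, hlin, hL⟩
  have := A.finQ
  have accepts_iff (ξ : GTree Sg arG) : A.Acc A.init 0 ξ ↔ ξ ∈ L3 := Set.ext_iff.1 hL ξ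
  have accepts (n : ℕ) : A.Acc A.init 0 (gpow n (sigT (gpow n hashT) (gpow n hashT))) :=
    (accepts_iff _).2 ⟨n, rfl⟩
  choose p hp plug using fun n => hlin.exists_reset_of_acc_gpow_sigT_self n (accepts n)
  obtain ⟨n₁, n₂, hne, hp₁₂⟩ := Finite.exists_ne_map_eq_of_infinite p
  rcases plug n₁ (gpow n₂ hashT) (hp₁₂ ▸ hp n₂) with h | h <;>
  · have := gpow_sigT_mem_L3_iff.1 ((accepts_iff _).1 h)
    omega
end
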